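/- Let R be a finite commutative principal ideal ring and G a finite group. If (C, D) is a linear complementary pair of two-sided ideals in R[G] (i.e., C ⊕ D = R[G]), then C and D^⊥ are permutation equivalent: there exists a permutation σ of the elements of G-indexed coordinates such that applying σ to coordinates maps D^⊥ onto C. In particular, the minimum Hamming distances satisfy d(C) = d(D^⊥). -/

import Mathlib

/-!
Since `C ∩ D = 0`, every product `d * c` with `d ∈ D`, `c ∈ C` lies in both ideals and vanishes;
writing `1 = e + f` with `e ∈ C`, `f ∈ D` then shows that `C` is exactly the right annihilator
of `D`. On the other hand `∑ g, x g * y g` is the coefficient at `1` of `x * y*`, where `y*` is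
`y` with coordinates reindexed by `g ↦ g⁻¹`, and as `D` is a left ideal this coefficient vanishes
for all `x ∈ D` iff `x * y* = 0` for all `x ∈ D`. Hence `y ∈ D^⊥ ↔ y* ∈ C`, so the coordinate
permutation `g ↦ g⁻¹` maps `D^⊥` onto `C`, and it preserves Hamming weights.
-/

open Finsupp

namespace TwoSidedIdeal

variable {A : Type*} [Ring A] {C D : TwoSidedIdeal A}

theorem mul_eq_zero_of_mem_of_mem (hinter : ∀ x, x ∈ C → x ∈ D → x = 0)
    {d c : A} (hd : d ∈ D) (hc : c ∈ C) : d * c = 0 :=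
  hinter _ (C.mul_mem_left _ _ hc) (D.mul_mem_right _ _ hd)

theorem mem_iff_forall_mul_eq_zero (hinter : ∀ x, x ∈ C → x ∈ D → x = 0)
    (hone : ∃ e ∈ C, ∃ f ∈ D, (1 : A) = e + f) {z : A} :
    z ∈ C ↔ ∀ d ∈ D, d * z = 0 := by
  refine ⟨fun hz d hd => mul_eq_zero_of_mem_of_mem hinter hd hz, fun hz => ?_⟩
  obtain ⟨e, he, f, hf, hef⟩ := hone
  have hz_eq : z = e * z := by
    rw [← add_zero (e * z), ← hz f hf, ← add_mul, ← hef, one_mul]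
  exact hz_eq ▸ C.mul_mem_right _ _ he

end TwoSidedIdeal

namespace MonoidAlgebra

variable {G : Type*}

section Semiring

variable {R : Type*} [Semiring R]

noncomputable def permuteCoeff (σ : Equiv.Perm G) (y : MonoidAlgebra R G) : MonoidAlgebra R G :=
  ofCoeff (equivMapDomain σ y.coeff)

theorem coeff_permuteCoeff (σ : Equiv.Perm G) (y : MonoidAlgebra R G) (g : G) :
    (permuteCoeff σ y).coeff g = y.coeff (σ.symm g) :=
  rfl

theorem permuteCoeff_eq_zero_iff {σ : Equiv.Perm G} {y : MonoidAlgebra R G} :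
    permuteCoeff σ y = 0 ↔ y = 0 := by
  rw [permuteCoeff, ofCoeff_eq_zero, ← coeff_eq_zero, ← equivCongrLeft_apply]
  exact (equivCongrLeft σ).injective.eq_iff' equivMapDomain_zero

theorem card_support_permuteCoeff (σ : Equiv.Perm G) (y : MonoidAlgebra R G) :
    (permuteCoeff σ y).coeff.support.card = y.coeff.support.card :=
  Finset.card_map _

theorem image_permuteCoeff_weights (σ : Equiv.Perm G) (S : Set (MonoidAlgebra R G)) :
    {n : ℕ | ∃ x ∈ permuteCoeff σ '' S, x ≠ 0 ∧ x.coeff.support.card = n} =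
      {n : ℕ | ∃ y ∈ S, y ≠ 0 ∧ y.coeff.support.card = n} := by
  ext n
  simp only [Set.mem_ofPred_eq, Set.exists_mem_image, ne_eq, permuteCoeff_eq_zero_iff,
    card_support_permuteCoeff]

variable [Group G]

theorem permuteCoeff_inv_involutive :
    Function.Involutive (permuteCoeff (R := R) (Equiv.inv G)) := fun y => by
  ext g
  simp only [coeff_permuteCoeff, Equiv.inv_symm, Equiv.inv_apply, inv_inv]

theorem sum_coeff_mul_coeff [Fintype G] (x y : MonoidAlgebra R G) :
    ∑ g : G, x.coeff g * y.coeff g = (x * permuteCoeff (Equiv.inv G) y).coeff 1 := by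
  rw [coeff_mul_apply_left, Finsupp.sum_fintype _ _ fun _ => zero_mul _]
  simp only [coeff_permuteCoeff, Equiv.inv_symm, Equiv.inv_apply, mul_one, inv_inv]

end Semiring

theorem forall_mem_coeff_one_mul_eq_zero_iff {R : Type*} [Ring R] [Group G]
    (D : TwoSidedIdeal (MonoidAlgebra R G)) (z : MonoidAlgebra R G) :
    (∀ x ∈ D, (x * z).coeff 1 = 0) ↔ ∀ x ∈ D, x * z = 0 := by
  refine ⟨fun h x hx => ?_, fun h x hx => by rw [h x hx]; rfl⟩
  ext g
  have := h _ (D.mul_mem_left (single g⁻¹ 1) x hx)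
  rwa [mul_assoc, coeff_single_mul_apply, one_mul, inv_inv, mul_one] at this

end MonoidAlgebra

open MonoidAlgebra in
theorem lcp_perm_equiv_general {R : Type*} [CommRing R]
    (G : Type*) [Group G] [Fintype G]
    (C D : TwoSidedIdeal (MonoidAlgebra R G))
    (hinter : ∀ x, x ∈ C → x ∈ D → x = 0)
    (hsum : ∀ x : MonoidAlgebra R G, ∃ c ∈ C, ∃ d ∈ D, x = c + d) :
    ∃ σ : Equiv.Perm G,
      (fun y : MonoidAlgebra R G => MonoidAlgebra.ofCoeff (Finsupp.equivMapDomain σ y.coeff)) ''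
          {y : MonoidAlgebra R G | ∀ x ∈ D, ∑ g : G, x.coeff g * y.coeff g = 0} =
        (C : Set (MonoidAlgebra R G)) ∧
      sInf {n : ℕ | ∃ x ∈ C, x ≠ 0 ∧ x.coeff.support.card = n} =
        sInf {n : ℕ | ∃ y : MonoidAlgebra R G,
          (∀ x ∈ D, ∑ g : G, x.coeff g * y.coeff g = 0) ∧ y ≠ 0 ∧ y.coeff.support.card = n} := by
  set dual := {y : MonoidAlgebra R G | ∀ x ∈ D, ∑ g : G, x.coeff g * y.coeff g = 0}
  have hdual : dual = permuteCoeff (Equiv.inv G) ⁻¹' C := by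
    ext y
    simp only [dual, Set.mem_ofPred_eq, Set.mem_preimage, SetLike.mem_coe, sum_coeff_mul_coeff,
      TwoSidedIdeal.mem_iff_forall_mul_eq_zero hinter (hsum 1)]
    exact forall_mem_coeff_one_mul_eq_zero_iff D _
  have himage : permuteCoeff (Equiv.inv G) '' dual = C := by
    rw [hdual, permuteCoeff_inv_involutive.image_eq_preimage_symm, ← Set.preimage_comp,
      permuteCoeff_inv_involutive.comp_self, Set.preimage_id]
  refine ⟨Equiv.inv G, himage, ?_⟩
  have hweights := image_permuteCoeff_weights (Equiv.inv G) dual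
  rw [himage] at hweights
  simpa only [dual, SetLike.mem_coe, Set.mem_ofPred_eq] using congrArg sInf hweights

/-- Let `R` be a finite commutative principal ideal ring and `G` a finite
group.  If `(C, D)` is a linear complementary pair of two-sided ideals in `R[G]`
(`C ∩ D = 0` and `C + D = R[G]`), then `C` and `D^⊥` are permutation equivalent: some
permutation `σ` of the `G`-indexed coordinates maps `D^⊥` onto `C`.  In particular the
minimum Hamming distances of `C` and `D^⊥` coincide. -/
theorem lcp_perm_equiv {R : Type*} [CommRing R] [Fintype R] [IsPrincipalIdealRing R]
    (G : Type*) [Group G] [Fintype G]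
    (C D : TwoSidedIdeal (MonoidAlgebra R G))
    (hinter : ∀ x, x ∈ C → x ∈ D → x = 0)
    (hsum : ∀ x : MonoidAlgebra R G, ∃ c ∈ C, ∃ d ∈ D, x = c + d) :
    ∃ σ : Equiv.Perm G,
      (fun y : MonoidAlgebra R G => MonoidAlgebra.ofCoeff (Finsupp.equivMapDomain σ y.coeff)) ''
          {y : MonoidAlgebra R G | ∀ x ∈ D, ∑ g : G, x.coeff g * y.coeff g = 0} =
        (C : Set (MonoidAlgebra R G)) ∧
      sInf {n : ℕ | ∃ x ∈ C, x ≠ 0 ∧ x.coeff.support.card = n} =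
        sInf {n : ℕ | ∃ y : MonoidAlgebra R G,
          (∀ x ∈ D, ∑ g : G, x.coeff g * y.coeff g = 0) ∧ y ≠ 0 ∧ y.coeff.support.card = n} :=
  lcp_perm_equiv_general G C D hinter hsum
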